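/- Define the bilinear-in-(u,v) operator A_{12}[u,v]h with Fourier coefficients (A_{12}[u,v]h)_k = Σ_{j≠0, |j|≠|k|} u_j v_{-j} (|j|^2/(8(|j|-|k|))) h_k for k ∈ Z^d \ {0}. Then for all s ≥ 0 and m_0 = 3/2 (dimension d ≥ 2): ||A_{12}[u,v]h||_s ≤ (3/8)·||u||_{m_0}·||v||_{m_0}·||h||_s, where ||·||_s is the zero-mean Sobolev norm ||u||_s^2 = Σ_{j≠0}|u_j|^2|j|^{2s}. -/

import Mathlib

/-!
Since `|j|²` and `|k|²` are distinct integers when `|j| ≠ |k|`, we have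
`||j| - |k|| · (|j| + |k|) ≥ 1`, which yields `|a₁₂(j,k)| ≤ (3/8)|j|³` uniformly in `k`.
By Cauchy–Schwarz the symbol `∑ⱼ u_j v_{-j} a₁₂(j,k)` is then bounded by
`(3/8)‖u‖_{3/2}‖v‖_{3/2}`, and `A₁₂[u,v]` is the Fourier multiplier with this symbol.
-/

open scoped Classical

/-- Euclidean norm of an integer vector (a Fourier mode on the torus). -/
noncomputable def inorm {d : ℕ} (j : Fin d → ℤ) : ℝ :=
  Real.sqrt (∑ i, ((j i : ℝ)) ^ 2)

/-- Sobolev `H^s` norm via Fourier coefficients. -/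
noncomputable def sobNorm {d : ℕ} (s : ℝ) (u : (Fin d → ℤ) → ℂ) : ℝ :=
  Real.sqrt (∑' j, ‖u j‖ ^ 2 * inorm j ^ (2 * s))

/-- Coefficient `a₁₂(j,k) = |j|² / (8(|j| − |k|))` for `|j| ≠ |k|`, `0` otherwise. -/
noncomputable def a12 {d : ℕ} (j k : Fin d → ℤ) : ℝ :=
  if inorm j = inorm k then 0 else inorm j ^ 2 / (8 * (inorm j - inorm k))

theorem Real.tsum_mul_le_sqrt_mul_sqrt {ι : Type*} {f g : ι → ℝ} (hf : ∀ i, 0 ≤ f i)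
    (hg : ∀ i, 0 ≤ g i) (hf_sum : Summable fun i => f i ^ 2)
    (hg_sum : Summable fun i => g i ^ 2) :
    Summable (fun i => f i * g i) ∧
      ∑' i, f i * g i ≤ √(∑' i, f i ^ 2) * √(∑' i, g i ^ 2) := by
  simp_rw [← Real.rpow_two, Real.sqrt_eq_rpow] at *
  exact Real.summable_and_inner_le_Lp_mul_Lq_tsum_of_nonneg .two_two hf hg hf_sum hg_sum

lemma rpow_sq_eq_rpow_two_mul {x : ℝ} (hx : 0 ≤ x) (m : ℝ) : (x ^ m) ^ 2 = x ^ (2 * m) := by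
  rw [← Real.rpow_natCast, ← Real.rpow_mul hx, Nat.cast_ofNat, mul_comm]

lemma one_le_three_mul_mul_abs_sub {a b : ℝ} (ha : 1 ≤ a) (hb : 0 ≤ b)
    (hab : 1 ≤ |a ^ 2 - b ^ 2|) : 1 ≤ 3 * a * |a - b| := by
  rcases le_or_gt b (2 * a) with hb2 | hb2
  · have hfac : |a ^ 2 - b ^ 2| = |a - b| * (a + b) := by
      rw [show a ^ 2 - b ^ 2 = (a - b) * (a + b) by ring, abs_mul,
        abs_of_nonneg (show 0 ≤ a + b by linarith)]
    nlinarith [abs_nonneg (a - b)]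
  · have : a < |a - b| := by
      rw [abs_sub_comm]; exact lt_of_lt_of_le (by linarith) (le_abs_self _)
    nlinarith

section inorm

variable {d : ℕ}

lemma inorm_nonneg (j : Fin d → ℤ) : 0 ≤ inorm j := Real.sqrt_nonneg _

lemma inorm_neg (j : Fin d → ℤ) : inorm (-j) = inorm j := by
  simp [inorm]

lemma inorm_sq (j : Fin d → ℤ) : inorm j ^ 2 = ((∑ i, j i ^ 2 : ℤ) : ℝ) := by
  rw [inorm, Real.sq_sqrt (by positivity)]
  push_cast
  rfl

lemma one_le_inorm {j : Fin d → ℤ} (hj : inorm j ≠ 0) : 1 ≤ inorm j := by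
  have hpos : (0 : ℤ) < ∑ i, j i ^ 2 := by
    have := pow_pos ((inorm_nonneg j).lt_of_ne' hj) 2
    rw [inorm_sq] at this
    exact_mod_cast this
  have : (1 : ℝ) ≤ inorm j ^ 2 := by rw [inorm_sq]; exact_mod_cast hpos
  nlinarith [inorm_nonneg j]

lemma one_le_abs_inorm_sq_sub {j k : Fin d → ℤ} (hjk : inorm j ≠ inorm k) :
    1 ≤ |inorm j ^ 2 - inorm k ^ 2| := by
  have hne : ∑ i, j i ^ 2 - ∑ i, k i ^ 2 ≠ 0 := by
    refine sub_ne_zero.mpr fun h => hjk ?_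
    have : inorm j ^ 2 = inorm k ^ 2 := by rw [inorm_sq, inorm_sq, h]
    exact (pow_left_inj₀ (inorm_nonneg j) (inorm_nonneg k) two_ne_zero).mp this
  rw [inorm_sq, inorm_sq, ← Int.cast_sub, ← Int.cast_abs]
  exact_mod_cast Int.one_le_abs hne

lemma abs_a12_le (j k : Fin d → ℤ) : |a12 j k| ≤ 3 / 8 * inorm j ^ 3 := by
  have hj := inorm_nonneg j
  unfold a12
  split_ifs with hjk
  · rw [abs_zero]; positivity
  rcases eq_or_ne (inorm j) 0 with hj0 | hj0
  · simp [hj0]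
  have key := one_le_three_mul_mul_abs_sub (one_le_inorm hj0) (inorm_nonneg k)
    (one_le_abs_inorm_sq_sub hjk)
  have hpos : 0 < |inorm j - inorm k| := abs_pos.mpr (sub_ne_zero.mpr hjk)
  rw [abs_div, abs_mul, abs_of_nonneg (sq_nonneg _), abs_of_pos (by norm_num : (0 : ℝ) < 8),
    div_le_iff₀ (by positivity)]
  nlinarith [mul_le_mul_of_nonneg_left key (sq_nonneg (inorm j))]

end inorm

section sobolev

variable {d : ℕ}

lemma summable_sobolev_comp_neg {m : ℝ} {v : (Fin d → ℤ) → ℂ}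
    (hv : Summable fun j => ‖v j‖ ^ 2 * inorm j ^ (2 * m)) :
    Summable fun j => ‖v (-j)‖ ^ 2 * inorm j ^ (2 * m) := by
  simpa [Function.comp_def, inorm_neg] using (Equiv.neg (Fin d → ℤ)).summable_iff.mpr hv

lemma sobNorm_comp_neg (m : ℝ) (v : (Fin d → ℤ) → ℂ) :
    sobNorm m (fun j => v (-j)) = sobNorm m v := by
  simpa [sobNorm, inorm_neg] using
    congrArg Real.sqrt ((Equiv.neg (Fin d → ℤ)).tsum_eq fun j => ‖v j‖ ^ 2 * inorm j ^ (2 * m))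

lemma tsum_norm_mul_norm_le_sobNorm_mul_sobNorm {m : ℝ} {u w : (Fin d → ℤ) → ℂ}
    (hu : Summable fun j => ‖u j‖ ^ 2 * inorm j ^ (2 * m))
    (hw : Summable fun j => ‖w j‖ ^ 2 * inorm j ^ (2 * m)) :
    Summable (fun j => ‖u j‖ * ‖w j‖ * inorm j ^ (2 * m)) ∧
      ∑' j, ‖u j‖ * ‖w j‖ * inorm j ^ (2 * m) ≤ sobNorm m u * sobNorm m w := by
  have hsq : ∀ (z : (Fin d → ℤ) → ℂ) j,
      (‖z j‖ * inorm j ^ m) ^ 2 = ‖z j‖ ^ 2 * inorm j ^ (2 * m) := fun z j => by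
    rw [mul_pow, rpow_sq_eq_rpow_two_mul (inorm_nonneg j)]
  have hprod : ∀ j, ‖u j‖ * ‖w j‖ * inorm j ^ (2 * m) =
      (‖u j‖ * inorm j ^ m) * (‖w j‖ * inorm j ^ m) := fun j => by
    rw [← rpow_sq_eq_rpow_two_mul (inorm_nonneg j)]; ring
  have hnonneg : ∀ (z : (Fin d → ℤ) → ℂ) j, 0 ≤ ‖z j‖ * inorm j ^ m := fun z j =>
    mul_nonneg (norm_nonneg _) (Real.rpow_nonneg (inorm_nonneg j) m)
  simp_rw [hprod, sobNorm, ← hsq]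
  exact Real.tsum_mul_le_sqrt_mul_sqrt (hnonneg u) (hnonneg w) (by simpa [hsq] using hu)
    (by simpa [hsq] using hw)

lemma norm_tsum_mul_le_of_abs_le {m C : ℝ} (hC : 0 ≤ C) {u v : (Fin d → ℤ) → ℂ}
    {c : (Fin d → ℤ) → ℝ} (hc : ∀ j, |c j| ≤ C * inorm j ^ (2 * m))
    (hu : Summable fun j => ‖u j‖ ^ 2 * inorm j ^ (2 * m))
    (hv : Summable fun j => ‖v j‖ ^ 2 * inorm j ^ (2 * m)) :
    ‖∑' j, u j * v (-j) * (c j : ℂ)‖ ≤ C * sobNorm m u * sobNorm m v := by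
  obtain ⟨hsum, hle⟩ :=
    tsum_norm_mul_norm_le_sobNorm_mul_sobNorm hu (summable_sobolev_comp_neg hv)
  have hterm : ∀ j, ‖u j * v (-j) * (c j : ℂ)‖ ≤ C * (‖u j‖ * ‖v (-j)‖ * inorm j ^ (2 * m)) :=
    fun j => by
      rw [norm_mul, norm_mul, Complex.norm_real, Real.norm_eq_abs]
      calc ‖u j‖ * ‖v (-j)‖ * |c j| ≤ ‖u j‖ * ‖v (-j)‖ * (C * inorm j ^ (2 * m)) := by
            gcongr; exact hc j
        _ = _ := by ring
  have hnorm_sum := (hsum.mul_left C).of_nonneg_of_le (fun j => norm_nonneg _) hterm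
  calc ‖∑' j, u j * v (-j) * (c j : ℂ)‖ ≤ ∑' j, ‖u j * v (-j) * (c j : ℂ)‖ :=
        norm_tsum_le_tsum_norm hnorm_sum
    _ ≤ ∑' j, C * (‖u j‖ * ‖v (-j)‖ * inorm j ^ (2 * m)) :=
        hnorm_sum.tsum_le_tsum hterm (hsum.mul_left C)
    _ = C * ∑' j, ‖u j‖ * ‖v (-j)‖ * inorm j ^ (2 * m) := tsum_mul_left
    _ ≤ C * (sobNorm m u * sobNorm m v) := by
        rw [← sobNorm_comp_neg m v]; gcongr
    _ = C * sobNorm m u * sobNorm m v := by ring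

lemma sobNorm_mul_le {s K : ℝ} {μ h : (Fin d → ℤ) → ℂ} (hμ : ∀ k, ‖μ k‖ ≤ K)
    (hh : Summable fun k => ‖h k‖ ^ 2 * inorm k ^ (2 * s)) :
    sobNorm s (fun k => μ k * h k) ≤ K * sobNorm s h := by
  have hK : 0 ≤ K := (norm_nonneg _).trans (hμ 0)
  have hterm : ∀ k, ‖μ k * h k‖ ^ 2 * inorm k ^ (2 * s)
      ≤ K ^ 2 * (‖h k‖ ^ 2 * inorm k ^ (2 * s)) := fun k => by
    have hw := Real.rpow_nonneg (inorm_nonneg k) (2 * s)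
    rw [norm_mul, mul_pow, ← mul_assoc]
    gcongr
    exact hμ k
  have hsum := (hh.mul_left (K ^ 2)).of_nonneg_of_le
    (fun k => mul_nonneg (sq_nonneg _) (Real.rpow_nonneg (inorm_nonneg k) _)) hterm
  calc sobNorm s (fun k => μ k * h k)
      ≤ √(∑' k, K ^ 2 * (‖h k‖ ^ 2 * inorm k ^ (2 * s))) :=
        Real.sqrt_le_sqrt (hsum.tsum_le_tsum hterm (hh.mul_left _))
    _ = K * sobNorm s h := by
        rw [tsum_mul_left, Real.sqrt_mul (sq_nonneg K), Real.sqrt_sq hK, sobNorm]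

end sobolev

theorem stmt_14_general {d : ℕ} (s : ℝ)
    (u v h : (Fin d → ℤ) → ℂ)
    (hu : Summable fun j => ‖u j‖ ^ 2 * inorm j ^ (2 * (3 / 2 : ℝ)))
    (hv : Summable fun j => ‖v j‖ ^ 2 * inorm j ^ (2 * (3 / 2 : ℝ)))
    (hh : Summable fun j => ‖h j‖ ^ 2 * inorm j ^ (2 * s)) :
    sobNorm s (fun k => (∑' j, u j * v (-j) * (a12 j k : ℂ)) * h k)
      ≤ (3 / 8) * sobNorm (3 / 2) u * sobNorm (3 / 2) v * sobNorm s h := by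
  refine sobNorm_mul_le (fun k => ?_) hh
  refine norm_tsum_mul_le_of_abs_le (by norm_num) (fun j => ?_) hu hv
  exact (abs_a12_le j k).trans_eq (by norm_num)

theorem stmt_14 {d : ℕ} (hd : 2 ≤ d) (s : ℝ) (hs : 0 ≤ s)
    (u v h : (Fin d → ℤ) → ℂ) (hu0 : u 0 = 0) (hv0 : v 0 = 0) (hh0 : h 0 = 0)
    (hu : Summable fun j => ‖u j‖ ^ 2 * inorm j ^ (2 * (3 / 2 : ℝ)))
    (hv : Summable fun j => ‖v j‖ ^ 2 * inorm j ^ (2 * (3 / 2 : ℝ)))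
    (hh : Summable fun j => ‖h j‖ ^ 2 * inorm j ^ (2 * s)) :
    sobNorm s (fun k => (∑' j, u j * v (-j) * (a12 j k : ℂ)) * h k)
      ≤ (3 / 8) * sobNorm (3 / 2) u * sobNorm (3 / 2) v * sobNorm s h :=
  stmt_14_general s u v h hu hv hh
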